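/- arXiv:2401.12515 — 2 statements merged into one kernel-verified Lean document; each statement's English description precedes it below -/
import Mathlib

section
/- Let F be a field of characteristic 2, let φ be a quadratic form over F of dimension at least 2, and let π be an anisotropic bilinear Pfister form over F such that π⊗φ is anisotropic. Then the first isotropy index of π⊗φ is at least dim(π), i.e., the total isotropy index of (π⊗φ) over the function field F(π⊗φ) is at least dim(π). -/
/- Common framework: quadratic forms over fields of characteristic 2,
represented as `QuadraticForm F (ι → F)` for a finite index type `ι`
(dimension = `Fintype.card ι`), diagonal bilinear forms represented by
their vectors of diagonal entries, isotropy indices, function fields of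
quadrics (characterized up to isomorphism), etc. -/

noncomputable section
namespace Char2QF

open QuadraticMap

variable (F : Type) [Field F]

/-- Scalar extension of a quadratic form on `ι → F` along a field extension `E/F`. -/
def qext {ι : Type} [Fintype ι] (φ : QuadraticForm F (ι → F))
    (E : Type) [Field E] [Algebra F E] : QuadraticForm E (ι → E) :=
  letI := Classical.decEq ι
  (∑ i : ι, algebraMap F E (φ (Pi.single i 1)) •
      linMulLin (LinearMap.proj i) (LinearMap.proj i))
  + ∑ i : ι, ∑ j : ι,
      if (Fintype.equivFin ι) i < (Fintype.equivFin ι) j then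
        algebraMap F E (polar φ (Pi.single i 1) (Pi.single j 1)) •
          linMulLin (LinearMap.proj i) (LinearMap.proj j)
      else 0

/-- The binary quadratic form `[a,b] : (x,y) ↦ a x² + x y + b y²`. -/
def binQF (a b : F) : QuadraticForm F (Bool → F) :=
  a • linMulLin (LinearMap.proj false) (LinearMap.proj false)
  + linMulLin (LinearMap.proj false) (LinearMap.proj true)
  + b • linMulLin (LinearMap.proj true) (LinearMap.proj true)

/-- The hyperbolic plane `H = [0,0]`. -/
def hyp : QuadraticForm F (Bool → F) := binQF F 0 0

/-- The totally singular diagonal quadratic form `⟨c i⟩ : v ↦ ∑ c i * (v i)²`. -/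
def diagQF {ι : Type} [Fintype ι] (c : ι → F) : QuadraticForm F (ι → F) :=
  ∑ i, c i • linMulLin (LinearMap.proj i) (LinearMap.proj i)

/-- Orthogonal sum of two quadratic forms. -/
def oplus {ι κ : Type} [Fintype ι] [Fintype κ]
    (φ : QuadraticForm F (ι → F)) (ψ : QuadraticForm F (κ → F)) :
    QuadraticForm F (ι ⊕ κ → F) :=
  φ.comp (LinearMap.funLeft F F Sum.inl) + ψ.comp (LinearMap.funLeft F F Sum.inr)

/-- Tensor product of the diagonal bilinear form with entries `b : κ → F`
with the quadratic form `φ`, i.e. `b₁·φ ⊥ … ⊥ b_k·φ`. -/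
def tmulQ {κ ι : Type} [Fintype κ] [Fintype ι] (b : κ → F)
    (φ : QuadraticForm F (ι → F)) : QuadraticForm F (κ × ι → F) :=
  ∑ k, b k • φ.comp (LinearMap.funLeft F F (fun i => (k, i)))

/-- Isometry of quadratic forms. -/
def QEquiv {V W : Type} [AddCommGroup V] [Module F V] [AddCommGroup W] [Module F W]
    (φ : QuadraticForm F V) (ψ : QuadraticForm F W) : Prop :=
  ∃ e : V ≃ₗ[F] W, ∀ v, ψ (e v) = φ v

/-- A quadratic form is isotropic if it has a nontrivial zero. -/
def Isotropic {V : Type} [AddCommGroup V] [Module F V] (φ : QuadraticForm F V) : Prop :=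
  ∃ v, v ≠ 0 ∧ φ v = 0

/-- `μ ≼ φ` : `μ` is (isometric to) the restriction of `φ` to a subspace. -/
def Dominates {V W : Type} [AddCommGroup V] [Module F V] [AddCommGroup W] [Module F W]
    (φ : QuadraticForm F V) (μ : QuadraticForm F W) : Prop :=
  ∃ f : W →ₗ[F] V, Function.Injective f ∧ ∀ w, φ (f w) = μ w

/-- The quadratic radical `{v | v ⊥ V and φ v = 0}`; its dimension is the defect. -/
def quadRadical {V : Type} [AddCommGroup V] [Module F V] (φ : QuadraticForm F V) :
    Submodule F V where
  carrier := {v | (∀ w, polar φ v w = 0) ∧ φ v = 0}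
  zero_mem' := by
    refine ⟨fun w => ?_, map_zero φ⟩
    simp [polar_zero_left]
  add_mem' := by
    rintro x y ⟨hx1, hx2⟩ ⟨hy1, hy2⟩
    refine ⟨fun w => ?_, ?_⟩
    · rw [polar_add_left, hx1 w, hy1 w, add_zero]
    · have : φ (x + y) = φ x + φ y + polar φ x y := by
        simp [polar]
      rw [this, hx1 y, hx2, hy2]; ring
  smul_mem' := by
    rintro c x ⟨hx1, hx2⟩
    refine ⟨fun w => ?_, ?_⟩
    · rw [polar_smul_left, hx1 w, smul_zero]
    · rw [QuadraticMap.map_smul, hx2, smul_zero]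

/-- The defect `i_d` of a quadratic form. -/
def iD {V : Type} [AddCommGroup V] [Module F V] (φ : QuadraticForm F V) : ℕ :=
  Module.finrank F (quadRadical F φ)

/-- The total isotropy index `i_t`: the maximal dimension of a totally isotropic subspace. -/
def iT {V : Type} [AddCommGroup V] [Module F V] (φ : QuadraticForm F V) : ℕ :=
  sSup {d | ∃ U : Submodule F V, Module.finrank F U = d ∧ ∀ v ∈ U, φ v = 0}

/-- The Witt index `i_W = i_t - i_d`. -/
def iW {V : Type} [AddCommGroup V] [Module F V] (φ : QuadraticForm F V) : ℕ :=
  iT F φ - iD F φ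

/-- A quadratic form is nonsingular (type `(r,0)`) iff its polar form is nondegenerate. -/
def Nonsingular {V : Type} [AddCommGroup V] [Module F V] (φ : QuadraticForm F V) : Prop :=
  ∀ x, (∀ y, polar φ x y = 0) → x = 0

/-- A quadratic form is totally singular iff its polar form vanishes identically. -/
def TotallySingular {V : Type} [AddCommGroup V] [Module F V] (φ : QuadraticForm F V) : Prop :=
  ∀ x y, polar φ x y = 0

/-- A quadratic form is round if its nonzero represented elements are
exactly its similarity factors. -/
def QRound {V : Type} [AddCommGroup V] [Module F V] (φ : QuadraticForm F V) : Prop :=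
  ∀ c : F, c ≠ 0 → ((∃ v, φ v = c) ↔ QEquiv F (c • φ) φ)

/-- `nsBlock a b = [a₁,b₁] ⊥ … ⊥ [a_r, b_r]`, a nonsingular quadratic form. -/
def nsBlock {r : ℕ} (a b : Fin r → F) : QuadraticForm F ((Fin r × Bool) → F) :=
  ∑ i, (binQF F (a i) (b i)).comp (LinearMap.funLeft F F (fun x => (i, x)))

/-- `φ` has type `(r,s)` : `φ ≅ [a₁,b₁] ⊥ … ⊥ [a_r,b_r] ⊥ ⟨c₁,…,c_s⟩`. -/
def HasType {ι : Type} [Fintype ι] (φ : QuadraticForm F (ι → F)) (r s : ℕ) : Prop :=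
  ∃ (a b : Fin r → F) (c : Fin s → F),
    QEquiv F φ (oplus F (nsBlock F a b) (diagQF F c))

/-! ### Diagonal (symmetric) bilinear forms, given by the vector of diagonal entries -/

/-- The symmetric bilinear pairing `(x,y) ↦ ∑ π i * x i * y i` of the
diagonal bilinear form with entries `π`. -/
def diagPair {ι : Type} [Fintype ι] (π : ι → F) (x y : ι → F) : F :=
  ∑ i, π i * x i * y i

/-- A (diagonal) bilinear form is anisotropic if `b(v,v) = 0` only for `v = 0`. -/
def BAnisotropic {ι : Type} [Fintype ι] (π : ι → F) : Prop :=
  ∀ v, diagPair F π v v = 0 → v = 0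

/-- Isometry of diagonal bilinear forms. -/
def BEquiv {ι κ : Type} [Fintype ι] [Fintype κ] (π : ι → F) (ρ : κ → F) : Prop :=
  ∃ e : (ι → F) ≃ₗ[F] (κ → F), ∀ x y, diagPair F ρ (e x) (e y) = diagPair F π x y

/-- A bilinear form is round if its set of nonzero represented elements `D(b)`
equals its set of similarity factors `G(b)`. -/
def BRound {ι : Type} [Fintype ι] (π : ι → F) : Prop :=
  ∀ a : F, a ≠ 0 → ((∃ v, diagPair F π v v = a) ↔ BEquiv F (fun i => a * π i) π)

/-- The diagonal entries of the `n`-fold bilinear Pfister form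
`⟨⟨a₁,…,aₙ⟩⟩ = ⟨1,a₁⟩_b ⊗ … ⊗ ⟨1,aₙ⟩_b`, indexed by subsets of `Fin n`. -/
def bPf {n : ℕ} (a : Fin n → F) : (Fin n → Bool) → F :=
  fun S => ∏ i, if S i then a i else 1

/-- The diagonal entries of the 1-fold bilinear Pfister form `⟨1,a⟩_b`. -/
def bPf1 (a : F) : Bool → F := fun s => if s then a else 1

/-- `L` is (isomorphic to) the function field `F(φ)` of the quadric of `φ`:
it is generated over `F` by the coordinates of a generic zero of `φ`
(normalized so that some coordinate is 1), i.e. by a zero of `φ` whose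
coordinates generate `L` and with transcendence degree `dim φ - 2` over `F`. -/
def IsFunctionField {ι : Type} [Fintype ι] (φ : QuadraticForm F (ι → F))
    (L : Type) [Field L] [Algebra F L] : Prop :=
  ∃ v : ι → L, qext F φ L v = 0 ∧ (∃ i, v i = 1) ∧
    IntermediateField.adjoin F (Set.range v) = ⊤ ∧
    ∃ s : Finset L, s.card + 2 = Fintype.card ι ∧
      IsTranscendenceBasis F (fun x : (s : Set L) => (x : L))

end Char2QF

/-!
Over `L` let `A = L[t₁, …, tₙ]/(tᵢ² - aᵢ)`, with basis `e_S = ∏_{i ∈ S} tᵢ`. In characteristic 2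
every square in `A` is a scalar, `x² = π(x)` for the quadratic form `π(x) = ∑ π_S x_S²` of
`⟨⟨a₁, …, aₙ⟩⟩`, and `(π ⊗ φ)_L` is the `e_∅`-coordinate of `φ` evaluated over `A` on
`A^ι ≅ L^(2ⁿ) ⊗ L^ι`. Hence `(π ⊗ φ)(u • w) = π(u) · (π ⊗ φ)(w)` for `u ∈ A`.

Let `v ≠ 0` be the generic zero of `π ⊗ φ` over its function field. If `A` is reduced, `u ↦ u • v`
embeds `A` into a totally isotropic subspace, of dimension `2ⁿ`. Otherwise some `z = tᵢ + u`, with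
`u` in the subalgebra `Aᵢ` generated by the `tⱼ`, `j ≠ i`, satisfies `z² = 0`, and `z` is injective
on `Aᵢ`; then `z • Aᵢ^ι` is totally isotropic, of dimension `2ⁿ⁻¹ · dim φ ≥ 2ⁿ`.
-/

namespace Char2QF

open Finset QuadraticMap
open scoped symmDiff

lemma quadraticMap_pi_ext {R N κ : Type} [CommRing R] [AddCommGroup N] [Module R N] [Fintype κ]
    [DecidableEq κ] {Q₁ Q₂ : QuadraticMap R (κ → R) N}
    (h : ∀ p, Q₁ (Pi.single p 1) = Q₂ (Pi.single p 1))
    (hpolar : ∀ p q, polar Q₁ (Pi.single p 1) (Pi.single q 1) =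
      polar Q₂ (Pi.single p 1) (Pi.single q 1)) :
    Q₁ = Q₂ := by
  have hsingle : ∀ (p : κ) (c : R), Pi.single p c = c • Pi.single p 1 := fun p c => by
    rw [← Pi.single_smul', smul_eq_mul, mul_one]
  ext w
  rw [← Finset.univ_sum_single w, QuadraticMap.map_sum', QuadraticMap.map_sum']
  congr 1
  · refine sum_congr rfl fun pq _ => ?_
    induction pq using Sym2.ind with
    | h p q =>
      rw [Sym2.map_mk, polarSym2_sym2Mk, polarSym2_sym2Mk, hsingle p, hsingle q, polar_smul_left,
        polar_smul_right, polar_smul_left, polar_smul_right, hpolar]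
  · exact sum_congr rfl fun p _ => by
      rw [hsingle, QuadraticMap.map_smul, QuadraticMap.map_smul, h]

lemma le_iT_of_injective {K V W : Type} [Field K] [AddCommGroup V] [Module K V]
    [FiniteDimensional K V] [AddCommGroup W] [Module K W] (Q : QuadraticForm K V)
    (f : W →ₗ[K] V) (hf : Function.Injective f) (hQ : ∀ w, Q (f w) = 0) :
    Module.finrank K W ≤ iT K Q := by
  rw [← LinearMap.finrank_range_of_inj hf]
  refine le_csSup ⟨Module.finrank K V, ?_⟩ ⟨_, rfl, ?_⟩
  · rintro d ⟨U, rfl, -⟩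
    exact U.finrank_le
  · rintro _ ⟨w, rfl⟩
    exact hQ w

section ExtendScalars

variable {F R : Type} [Field F] [CommRing R] {ι : Type} [Fintype ι]

def extendScalars (f : F →+* R) (φ : QuadraticForm F (ι → F)) : QuadraticForm R (ι → R) :=
  letI := Classical.decEq ι
  (∑ i : ι, f (φ (Pi.single i 1)) • linMulLin (LinearMap.proj i) (LinearMap.proj i))
  + ∑ i : ι, ∑ j : ι,
      if (Fintype.equivFin ι) i < (Fintype.equivFin ι) j then
        f (polar φ (Pi.single i 1) (Pi.single j 1)) • linMulLin (LinearMap.proj i) (LinearMap.proj j)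
      else 0

lemma qext_eq_extendScalars (φ : QuadraticForm F (ι → F)) (E : Type) [Field E] [Algebra F E] :
    qext F φ E = extendScalars (algebraMap F E) φ := rfl

lemma extendScalars_apply [DecidableEq ι] (f : F →+* R) (φ : QuadraticForm F (ι → F))
    (w : ι → R) :
    extendScalars f φ w = (∑ i, f (φ (Pi.single i 1)) * (w i * w i)) +
      ∑ i, ∑ j, if (Fintype.equivFin ι) i < (Fintype.equivFin ι) j then
        f (polar φ (Pi.single i 1) (Pi.single j 1)) * (w i * w j) else 0 := by
  simp only [extendScalars, add_apply, _root_.sum_apply, smul_apply, linMulLin_apply,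
    LinearMap.proj_apply, smul_eq_mul, apply_ite (fun Q : QuadraticForm R (ι → R) => Q w),
    zero_apply]
  congr!

lemma extendScalars_single [DecidableEq ι] (f : F →+* R) (φ : QuadraticForm F (ι → F)) (i : ι)
    (x : R) : extendScalars f φ (Pi.single i x) = f (φ (Pi.single i 1)) * (x * x) := by
  rw [extendScalars_apply, sum_eq_single i (fun k _ hk => by simp [hk]) (by simp)]
  simp only [Pi.single_apply]
  rw [sum_eq_zero fun k _ => sum_eq_zero fun l _ => ?_]
  · simp
  · by_cases hk : k = i <;> by_cases hl : l = i <;> simp_all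

lemma polar_extendScalars [DecidableEq ι] (f : F →+* R) (φ : QuadraticForm F (ι → F))
    (a b : ι → R) :
    polar (extendScalars f φ) a b = (∑ k, f (φ (Pi.single k 1)) * (2 * (a k * b k))) +
      ∑ k, ∑ l, if (Fintype.equivFin ι) k < (Fintype.equivFin ι) l then
        f (polar φ (Pi.single k 1) (Pi.single l 1)) * (a k * b l + b k * a l) else 0 := by
  have h₁ : ∀ k, (a k + b k) * (a k + b k) = a k * a k + b k * b k + 2 * (a k * b k) :=
    fun k => by ring
  have h₂ : ∀ k l, (a k + b k) * (a l + b l) = a k * a l + b k * b l + (a k * b l + b k * a l) :=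
    fun k l => by ring
  simp only [polar, extendScalars_apply, Pi.add_apply, h₁, h₂, mul_add, ite_add_zero,
    sum_add_distrib]
  ring

lemma polar_extendScalars_single [DecidableEq ι] (f : F →+* R) (φ : QuadraticForm F (ι → F))
    (i j : ι) (x y : R) :
    polar (extendScalars f φ) (Pi.single i x) (Pi.single j y) =
      f (polar φ (Pi.single i 1) (Pi.single j 1)) * (x * y) := by
  rw [polar_extendScalars]
  simp only [Pi.single_apply, mul_ite, ite_mul, mul_zero, zero_mul, mul_add, ite_add_zero,
    sum_add_distrib]
  rw [sum_eq_single i (fun k _ hk => by simp [hk]) (by simp),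
    sum_eq_single i (fun k _ hk => sum_eq_zero fun l _ => by simp [hk]) (by simp),
    sum_eq_single j (fun l _ hl => by simp [hl]) (by simp),
    sum_eq_single j (fun k _ hk => sum_eq_zero fun l _ => by simp [hk]) (by simp),
    sum_eq_single i (fun l _ hl => by simp [hl]) (by simp)]
  set o := Fintype.equivFin ι
  rcases lt_trichotomy (o i) (o j) with h | h | h
  · have hij : i ≠ j := fun hij => h.ne (by rw [hij])
    simp [h, h.not_gt, hij]
  · obtain rfl : i = j := o.injective h
    simp [QuadraticMap.polar_self, map_ofNat]
    ring
  · have hij : i ≠ j := fun hij => h.ne (by rw [hij])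
    simp [h, h.not_gt, hij, polar_comm φ (Pi.single j 1), mul_comm y x]

end ExtendScalars

section TensorWithDiagonal

variable {F : Type} [Field F] {κ ι : Type}

lemma row_single [DecidableEq κ] [DecidableEq ι] (S k : κ) (i : ι) :
    (fun j => (Pi.single (S, i) 1 : κ × ι → F) (k, j)) = if k = S then Pi.single i 1 else 0 := by
  by_cases hk : k = S
  · subst hk; ext j; simp [Pi.single_apply]
  · ext j; simp [hk]

variable [Fintype κ] [Fintype ι]

lemma tmulQ_apply (b : κ → F) (φ : QuadraticForm F (ι → F)) (v : κ × ι → F) :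
    tmulQ F b φ v = ∑ k, b k * φ (fun i => v (k, i)) := by
  simp [tmulQ, smul_eq_mul]
  rfl

lemma polar_tmulQ (b : κ → F) (φ : QuadraticForm F (ι → F)) (x y : κ × ι → F) :
    polar (tmulQ F b φ) x y = ∑ k, b k * polar φ (fun i => x (k, i)) (fun i => y (k, i)) := by
  simp only [polar, tmulQ_apply, ← sum_sub_distrib, mul_sub]
  rfl

variable [DecidableEq κ] [DecidableEq ι]

lemma tmulQ_single (b : κ → F) (φ : QuadraticForm F (ι → F)) (S : κ) (i : ι) :
    tmulQ F b φ (Pi.single (S, i) 1) = b S * φ (Pi.single i 1) := by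
  rw [tmulQ_apply, sum_eq_single S (fun k _ hk => by rw [row_single, if_neg hk, map_zero, mul_zero])
    (by simp), row_single, if_pos rfl]

lemma polar_tmulQ_single (b : κ → F) (φ : QuadraticForm F (ι → F)) (S T : κ) (i j : ι) :
    polar (tmulQ F b φ) (Pi.single (S, i) 1) (Pi.single (T, j) 1) =
      if S = T then b S * polar φ (Pi.single i 1) (Pi.single j 1) else 0 := by
  rw [polar_tmulQ, sum_eq_single S (fun k _ hk => by
    rw [row_single, if_neg hk, polar_zero_left, mul_zero]) (by simp), row_single, row_single,
    if_pos rfl]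
  split_ifs with hST
  · rfl
  · rw [polar_zero_right, mul_zero]

end TensorWithDiagonal

section Pfister

variable {L : Type} {n : ℕ}

/-- The algebra `L[t₁, …, tₙ]/(tᵢ² - αᵢ)`, by its coordinates in the basis
`e_S = ∏_{i ∈ S} tᵢ`, `S : Fin n → Bool`. -/
@[ext]
structure PfisterAlgebra (α : Fin n → L) where
  coeff : (Fin n → Bool) → L

lemma PfisterAlgebra.coeff_injective {α : Fin n → L} :
    Function.Injective (coeff : PfisterAlgebra α → _) :=
  fun _ _ => PfisterAlgebra.ext

variable [Field L]

lemma bPf_bot (α : Fin n → L) : bPf L α ⊥ = 1 := by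
  simp [bPf]

lemma bPf_inf_mul_bPf_symmDiff_inf (α : Fin n → L) (S T U : Fin n → Bool) :
    bPf L α (S ⊓ T) * bPf L α ((S ∆ T) ⊓ U) = bPf L α (T ⊓ U) * bPf L α (S ⊓ (T ∆ U)) := by
  have key : ∀ (a : L) (s t u : Bool),
      ((if s ⊓ t then a else 1) * if (s ∆ t) ⊓ u then a else 1) =
        (if t ⊓ u then a else 1) * if s ⊓ (t ∆ u) then a else 1 := by
    intro a s t u; cases s <;> cases t <;> cases u <;> simp
  simp only [bPf, ← prod_mul_distrib]
  exact prod_congr rfl fun j _ => key (α j) (S j) (T j) (U j)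

namespace PfisterAlgebra

variable {α : Fin n → L}

instance : Zero (PfisterAlgebra α) := ⟨⟨0⟩⟩
instance : Add (PfisterAlgebra α) := ⟨fun x y => ⟨x.coeff + y.coeff⟩⟩
instance : Neg (PfisterAlgebra α) := ⟨fun x => ⟨-x.coeff⟩⟩
instance : Sub (PfisterAlgebra α) := ⟨fun x y => ⟨x.coeff - y.coeff⟩⟩
instance {R : Type} [SMul R L] : SMul R (PfisterAlgebra α) := ⟨fun c x => ⟨c • x.coeff⟩⟩

instance : AddCommGroup (PfisterAlgebra α) :=
  coeff_injective.addCommGroup _ rfl (fun _ _ => rfl) (fun _ => rfl) (fun _ _ => rfl)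
    (fun _ _ => rfl) (fun _ _ => rfl)

instance : Module L (PfisterAlgebra α) :=
  coeff_injective.module L ⟨⟨coeff, rfl⟩, fun _ _ => rfl⟩ (fun _ _ => rfl)

variable (α) in
def coeffEquiv : PfisterAlgebra α ≃ₗ[L] (Fin n → Bool) → L where
  toFun := coeff
  invFun := mk
  map_add' _ _ := rfl
  map_smul' _ _ := rfl
  left_inv _ := rfl
  right_inv _ := rfl

instance : Module.Finite L (PfisterAlgebra α) := Module.Finite.equiv (coeffEquiv α).symm

lemma finrank_eq : Module.finrank L (PfisterAlgebra α) = 2 ^ n := by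
  simp [(coeffEquiv α).finrank_eq]

@[simp] lemma coeff_zero : (0 : PfisterAlgebra α).coeff = 0 := rfl
@[simp] lemma coeff_add (x y : PfisterAlgebra α) : (x + y).coeff = x.coeff + y.coeff := rfl
@[simp] lemma coeff_smul (c : L) (x : PfisterAlgebra α) : (c • x).coeff = c • x.coeff := rfl
@[simp] lemma coeff_sum {κ : Type} (s : Finset κ) (f : κ → PfisterAlgebra α) :
    (∑ k ∈ s, f k).coeff = ∑ k ∈ s, (f k).coeff := map_sum (coeffEquiv α) f s

variable (α) in
def monomial (S : Fin n → Bool) : PfisterAlgebra α := ⟨Pi.single S 1⟩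

@[simp] lemma coeff_monomial (S : Fin n → Bool) :
    (monomial α S).coeff = Pi.single S 1 := rfl

lemma sum_smul_monomial (x : PfisterAlgebra α) : ∑ S, x.coeff S • monomial α S = x := by
  ext T; simp [Pi.single_apply]

/-- The relations `tᵢ² = αᵢ` give `e_S * e_T = α^(S ∩ T) e_(S ∆ T)`. -/
def mulₗ (α : Fin n → L) : PfisterAlgebra α →ₗ[L] PfisterAlgebra α →ₗ[L] PfisterAlgebra α :=
  LinearMap.mk₂ L
    (fun x y => ∑ S, ∑ T, (x.coeff S * y.coeff T * bPf L α (S ⊓ T)) • monomial α (S ∆ T))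
    (fun x x' y => by simp only [coeff_add, Pi.add_apply, add_mul, add_smul, sum_add_distrib])
    (fun c x y => by
      simp only [coeff_smul, Pi.smul_apply, smul_eq_mul, smul_sum, smul_smul, mul_assoc])
    (fun x y y' => by
      simp only [coeff_add, Pi.add_apply, mul_add, add_mul, add_smul, sum_add_distrib])
    (fun c x y => by
      simp only [coeff_smul, Pi.smul_apply, smul_eq_mul, smul_sum, smul_smul]; congr! 3; ring)

instance : Mul (PfisterAlgebra α) := ⟨fun x y => mulₗ α x y⟩
instance : One (PfisterAlgebra α) := ⟨monomial α ⊥⟩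

lemma mul_def (x y : PfisterAlgebra α) : x * y = mulₗ α x y := rfl

lemma one_def : (1 : PfisterAlgebra α) = monomial α ⊥ := rfl

lemma monomial_mul_monomial (S T : Fin n → Bool) :
    monomial α S * monomial α T = bPf L α (S ⊓ T) • monomial α (S ∆ T) := by
  simp only [mul_def, mulₗ, LinearMap.mk₂_apply, coeff_monomial]
  rw [sum_eq_single S (fun S' _ h => by simp [h]) (by simp),
    sum_eq_single T (fun T' _ h => by simp [h]) (by simp)]
  simp

lemma coeff_mul (x y : PfisterAlgebra α) (U : Fin n → Bool) :
    (x * y).coeff U = ∑ S, x.coeff S * y.coeff (S ∆ U) * bPf L α (S ⊓ (S ∆ U)) := by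
  simp only [mul_def, mulₗ, LinearMap.mk₂_apply, coeff_sum, coeff_smul, coeff_monomial,
    Finset.sum_apply, Pi.smul_apply, Pi.single_apply, smul_eq_mul, mul_ite, mul_one, mul_zero]
  refine sum_congr rfl fun S _ => ?_
  rw [sum_eq_single (S ∆ U)
    (fun T _ hT => if_neg fun h => hT (by rw [h, symmDiff_symmDiff_cancel_left])) (by simp),
    if_pos (symmDiff_symmDiff_cancel_left S U).symm]

protected lemma mul_assoc (x y z : PfisterAlgebra α) : x * y * z = x * (y * z) := by
  rw [← sum_smul_monomial x, ← sum_smul_monomial y, ← sum_smul_monomial z]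
  simp only [mul_def, map_sum, map_smul, LinearMap.sum_apply, LinearMap.smul_apply]
  simp only [← mul_def, monomial_mul_monomial, map_smul, LinearMap.smul_apply, smul_sum, smul_smul]
  refine sum_congr rfl fun U _ => sum_congr rfl fun T _ => sum_congr rfl fun S _ => ?_
  rw [symmDiff_assoc]
  congr 1
  linear_combination (x.coeff S * y.coeff T * z.coeff U) * bPf_inf_mul_bPf_symmDiff_inf α S T U

protected lemma mul_comm (x y : PfisterAlgebra α) : x * y = y * x := by
  simp only [mul_def, mulₗ, LinearMap.mk₂_apply]
  rw [sum_comm]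
  refine sum_congr rfl fun S _ => sum_congr rfl fun T _ => ?_
  rw [inf_comm, symmDiff_comm, mul_comm (x.coeff T)]

protected lemma one_mul (x : PfisterAlgebra α) : 1 * x = x := by
  ext U
  rw [coeff_mul, sum_eq_single ⊥ (fun S _ hS => by simp [one_def, hS]) (by simp)]
  simp [one_def, bPf_bot]

instance : CommRing (PfisterAlgebra α) :=
  { (inferInstance : AddCommGroup (PfisterAlgebra α)) with
    mul_assoc := PfisterAlgebra.mul_assoc
    one_mul := PfisterAlgebra.one_mul
    mul_one := fun x => (PfisterAlgebra.mul_comm x 1).trans (PfisterAlgebra.one_mul x)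
    left_distrib := fun x y z => map_add (mulₗ α x) y z
    right_distrib := fun x y z => by simp only [mul_def, map_add, LinearMap.add_apply]
    zero_mul := fun x => by simp only [mul_def, map_zero, LinearMap.zero_apply]
    mul_zero := fun x => by simp only [mul_def, map_zero]
    mul_comm := PfisterAlgebra.mul_comm }

instance : Algebra L (PfisterAlgebra α) :=
  Algebra.ofModule (fun c x y => by simp only [mul_def, map_smul, LinearMap.smul_apply])
    (fun c x y => by simp only [mul_def, map_smul])

instance : Nontrivial (PfisterAlgebra α) :=
  ⟨⟨1, 0, fun h => by simpa [one_def] using congrArg (fun x => x.coeff ⊥) h⟩⟩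

instance [CharP L 2] : CharP (PfisterAlgebra α) 2 := charP_of_injective_algebraMap' L 2

lemma monomial_mul_self (S : Fin n → Bool) :
    monomial α S * monomial α S = algebraMap L _ (bPf L α S) := by
  rw [monomial_mul_monomial, inf_idem, symmDiff_self, Algebra.algebraMap_eq_smul_one, one_def]

lemma mul_self_eq_algebraMap [CharP L 2] (x : PfisterAlgebra α) :
    x * x = algebraMap L _ (diagPair L (bPf L α) x.coeff x.coeff) := by
  conv_lhs => rw [← sum_smul_monomial x]
  rw [CharTwo.sum_mul_self, diagPair, map_sum]
  refine sum_congr rfl fun S _ => ?_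
  rw [smul_mul_smul, monomial_mul_self, Algebra.smul_def, ← map_mul]
  congr 1
  ring

lemma coeff_mul_bot (x y : PfisterAlgebra α) :
    (x * y).coeff ⊥ = diagPair L (bPf L α) x.coeff y.coeff := by
  simp only [coeff_mul, symmDiff_bot, inf_idem, diagPair]
  exact sum_congr rfl fun S _ => by ring

lemma coeff_monomial_mul (S : Fin n → Bool) (y : PfisterAlgebra α) (U : Fin n → Bool) :
    (monomial α S * y).coeff U = bPf L α (S ⊓ (S ∆ U)) * y.coeff (S ∆ U) := by
  rw [coeff_mul, sum_eq_single S (fun S' _ hS => by simp [hS]) (by simp)]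
  simp [mul_comm]

def single (i : Fin n) : Fin n → Bool := fun j => decide (j = i)

@[simp] lemma single_apply (i j : Fin n) : single i j = decide (j = i) := rfl

lemma single_symmDiff_apply_of_ne {i j : Fin n} (h : j ≠ i) (U : Fin n → Bool) :
    (single i ∆ U) j = U j := by
  simp [Bool.symmDiff_eq_xor, h]

variable (α) in
def gen (i : Fin n) : PfisterAlgebra α := monomial α (single i)

lemma gen_mul_self (i : Fin n) : gen α i * gen α i = algebraMap L _ (α i) := by
  rw [gen, monomial_mul_self]
  simp [bPf]

lemma coeff_gen_mul (i : Fin n) (y : PfisterAlgebra α) {U : Fin n → Bool} (hU : U i = true) :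
    (gen α i * y).coeff U = y.coeff (single i ∆ U) := by
  have h : single i ⊓ (single i ∆ U) = ⊥ := by
    funext j
    by_cases hj : j = i
    · subst hj; simp [hU]
    · simp [hj]
  rw [gen, coeff_monomial_mul, h, bPf_bot, one_mul]

variable (α) in
/-- The subalgebra generated by the `tⱼ` with `j ∈ J`, i.e. spanned by the `e_T` with `T ⊆ J`. -/
def supported (J : Finset (Fin n)) : Subalgebra L (PfisterAlgebra α) where
  carrier := {x | ∀ T j, T j = true → j ∉ J → x.coeff T = 0}
  mul_mem' {x y} hx hy T j hT hj := by
    rw [coeff_mul]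
    refine sum_eq_zero fun S _ => ?_
    cases hS : S j
    · rw [hy _ j (by simp [hS, hT]) hj]; ring
    · rw [hx _ j hS hj]; ring
  add_mem' {x y} hx hy T j hT hj := by simp [hx T j hT hj, hy T j hT hj]
  algebraMap_mem' c T j hT _ := by
    have : T ≠ ⊥ := fun h => by simp [h] at hT
    simp [Algebra.algebraMap_eq_smul_one, one_def, this]

lemma supported_mono {J K : Finset (Fin n)} (h : J ⊆ K) : supported α J ≤ supported α K :=
  fun _ hx T j hT hj => hx T j hT fun hJ => hj (h hJ)

lemma mem_supported_erase {i : Fin n} {x : PfisterAlgebra α} :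
    x ∈ supported α (univ.erase i) ↔ ∀ T, T i = true → x.coeff T = 0 := by
  refine ⟨fun hx T hT => hx T i hT (by simp), fun h T j hT hj => ?_⟩
  obtain rfl : j = i := by simpa using hj
  exact h T hT

lemma supported_empty : supported α ∅ = ⊥ := by
  refine le_antisymm (fun x hx => Algebra.mem_bot.2 ⟨x.coeff ⊥, ?_⟩) bot_le
  ext T
  by_cases hT : T = ⊥
  · simp [hT, Algebra.algebraMap_eq_smul_one, one_def]
  · obtain ⟨j, hj⟩ := Function.ne_iff.1 hT
    rw [hx T j (by simpa using hj) (notMem_empty j)]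
    simp [Algebra.algebraMap_eq_smul_one, one_def, hT]

lemma supported_univ : supported α univ = ⊤ :=
  eq_top_iff.2 fun _ _ _ _ _ hj => absurd (mem_univ _) hj

lemma exists_eq_add_gen_mul {i : Fin n} {J : Finset (Fin n)} {x : PfisterAlgebra α}
    (hx : x ∈ supported α (insert i J)) :
    ∃ x₀ ∈ supported α J, ∃ x₁ ∈ supported α J, x = x₀ + gen α i * x₁ := by
  refine ⟨⟨fun T => if T i then 0 else x.coeff T⟩, fun T j hT hj => ?_,
    ⟨fun T => if T i then 0 else x.coeff (single i ∆ T)⟩, fun T j hT hj => ?_, ?_⟩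
  · cases hTi : T i
    · have hji : j ≠ i := by rintro rfl; simp [hTi] at hT
      simpa [hTi] using hx T j hT (by simp [hji, hj])
    · simp [hTi]
  · cases hTi : T i
    · have hji : j ≠ i := by rintro rfl; simp [hTi] at hT
      simpa [hTi] using hx _ j (by rwa [single_symmDiff_apply_of_ne hji]) (by simp [hji, hj])
    · simp [hTi]
  · ext U
    cases hU : U i
    · rw [coeff_add, Pi.add_apply, gen, coeff_monomial_mul]
      simp [hU]
    · rw [coeff_add, Pi.add_apply, coeff_gen_mul i _ hU]
      simp [hU, symmDiff_symmDiff_cancel_left]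

lemma eq_zero_of_add_gen_mul_eq_zero {i : Fin n} {x₀ x₁ : PfisterAlgebra α}
    (h₀ : x₀ ∈ supported α (univ.erase i)) (h₁ : x₁ ∈ supported α (univ.erase i))
    (h : x₀ + gen α i * x₁ = 0) : x₁ = 0 := by
  ext T
  cases hT : T i
  · have hU : (single i ∆ T) i = true := by simp [hT]
    have := congrArg (fun x => x.coeff (single i ∆ T)) h
    simpa [coeff_gen_mul i _ hU, symmDiff_symmDiff_cancel_left,
      mem_supported_erase.1 h₀ _ hU] using this
  · exact mem_supported_erase.1 h₁ T hT

lemma exists_mul_self_eq_algebraMap [CharP L 2] (J : Finset (Fin n)) :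
    ∀ x ∈ supported α J, x ≠ 0 → x * x = 0 →
      ∃ i, ∃ u ∈ supported α (univ.erase i), u * u = algebraMap L _ (α i) := by
  induction J using Finset.induction_on with
  | empty =>
    intro x hx hx0 hxx
    rw [supported_empty, Algebra.mem_bot] at hx
    obtain ⟨c, rfl⟩ := hx
    rw [← map_mul, map_eq_zero_iff _ (algebraMap L _).injective, mul_self_eq_zero] at hxx
    exact absurd (by rw [hxx, map_zero]) hx0
  | insert i J hi ih =>
    -- `x = x₀ + tᵢ x₁` gives `0 = x² = x₀² + αᵢ x₁²`: either `u = x₀ x₁ / x₁²` works, or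
    -- `x₁` (or `x₀`, if `x₁ = 0`) is a nonzero element of square zero free of `tᵢ`.
    intro x hx hx0 hxx
    obtain ⟨x₀, hx₀, x₁, hx₁, rfl⟩ := exists_eq_add_gen_mul hx
    obtain ⟨q₀, h₀⟩ : ∃ q, x₀ * x₀ = algebraMap L _ q := ⟨_, mul_self_eq_algebraMap x₀⟩
    obtain ⟨q₁, h₁⟩ : ∃ q, x₁ * x₁ = algebraMap L _ q := ⟨_, mul_self_eq_algebraMap x₁⟩
    have hq : q₀ = α i * q₁ := by
      rw [CharTwo.add_mul_self, mul_mul_mul_comm, gen_mul_self, h₀, h₁, ← map_mul, ← map_add,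
        map_eq_zero_iff _ (algebraMap L _).injective, CharTwo.add_eq_zero] at hxx
      exact hxx
    by_cases hq₁ : q₁ = 0
    · by_cases hx₁0 : x₁ = 0
      · rw [hx₁0, mul_zero, add_zero] at hx0
        exact ih x₀ hx₀ hx0 (by rw [h₀, hq, hq₁, mul_zero, map_zero])
      · exact ih x₁ hx₁ hx₁0 (by rw [h₁, hq₁, map_zero])
    · have hJ : J ⊆ univ.erase i := fun j hj => mem_erase.2 ⟨fun h => hi (h ▸ hj), mem_univ j⟩
      refine ⟨i, q₁⁻¹ • (x₀ * x₁),
        supported_mono hJ (Subalgebra.smul_mem _ (Subalgebra.mul_mem _ hx₀ hx₁) _), ?_⟩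
      rw [smul_mul_smul, mul_mul_mul_comm, h₀, h₁, ← map_mul, Algebra.smul_def, ← map_mul, hq]
      congr 1
      field_simp

lemma exists_mul_self_eq_zero_injOn [CharP L 2] {x : PfisterAlgebra α} (hx : x ≠ 0)
    (hxx : x * x = 0) :
    ∃ i, ∃ z : PfisterAlgebra α, z * z = 0 ∧
      ∀ y ∈ supported α (univ.erase i), z * y = 0 → y = 0 := by
  obtain ⟨i, u, hu, huu⟩ :=
    exists_mul_self_eq_algebraMap univ x (supported_univ (α := α) ▸ Algebra.mem_top) hx hxx
  refine ⟨i, gen α i + u, ?_, fun y hy h => ?_⟩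
  · rw [CharTwo.add_mul_self, gen_mul_self, huu, CharTwo.add_self_eq_zero]
  · refine eq_zero_of_add_gen_mul_eq_zero (Subalgebra.mul_mem _ hu hy) hy ?_
    rw [← h]
    ring

lemma two_pow_le_two_mul_finrank_supported (i : Fin n) :
    2 ^ n ≤ 2 * Module.finrank L (supported α (univ.erase i)) := by
  set S := supported α (univ.erase i)
  let f : S × S →ₗ[L] PfisterAlgebra α :=
    S.val.toLinearMap.coprod ((LinearMap.mulLeft L (gen α i)).comp S.val.toLinearMap)
  have hf : Function.Surjective f := fun x => by
    have hx : x ∈ supported α (insert i (univ.erase i)) := by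
      rw [insert_erase (mem_univ i), supported_univ]
      exact Algebra.mem_top
    obtain ⟨x₀, hx₀, x₁, hx₁, rfl⟩ := exists_eq_add_gen_mul hx
    exact ⟨(⟨x₀, hx₀⟩, ⟨x₁, hx₁⟩), rfl⟩
  have := LinearMap.finrank_le_finrank_of_surjective hf
  rw [finrank_eq, Module.finrank_prod] at this
  omega

variable (α) (ι : Type)

def columns : ((Fin n → Bool) × ι → L) ≃ₗ[L] (ι → PfisterAlgebra α) where
  toFun w i := ⟨fun S => w (S, i)⟩
  invFun x p := (x p.2).coeff p.1
  map_add' _ _ := rfl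
  map_smul' _ _ := rfl
  left_inv _ := rfl
  right_inv _ := rfl

lemma columns_single [DecidableEq ι] (S : Fin n → Bool) (i : ι) :
    columns α ι (Pi.single (S, i) 1) = Pi.single i (monomial α S) := by
  ext j T
  by_cases hj : j = i
  · subst hj; simp [columns, Pi.single_apply]
  · simp [columns, hj]

end PfisterAlgebra

end Pfister

open PfisterAlgebra

section PfisterTensor

variable {F L : Type} [Field F] [Field L] [Algebra F L] {n : ℕ} {ι : Type} [Fintype ι]

lemma bPf_map (a : Fin n → F) (S : Fin n → Bool) :
    bPf L (fun j => algebraMap F L (a j)) S = algebraMap F L (bPf F a S) := by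
  simp [bPf, apply_ite]

lemma diagPair_monomial {α : Fin n → L} (S T : Fin n → Bool) :
    diagPair L (bPf L α) (monomial α S).coeff (monomial α T).coeff =
      if S = T then bPf L α S else 0 := by
  by_cases h : S = T
  · subst h; simp [diagPair, Pi.single_apply]
  · simp [diagPair, Pi.single_apply, h, Ne.symm h]

variable (a : Fin n → F) (φ : QuadraticForm F (ι → F))

lemma qext_tmulQ_bPf_eq_coeff (w : (Fin n → Bool) × ι → L) :
    qext F (tmulQ F (bPf F a) φ) L w =
      (extendScalars ((algebraMap L (PfisterAlgebra fun j => algebraMap F L (a j))).comp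
        (algebraMap F L)) φ (columns _ ι w)).coeff ⊥ := by
  classical
  set α : Fin n → L := fun j => algebraMap F L (a j)
  set Φ := extendScalars ((algebraMap L (PfisterAlgebra α)).comp (algebraMap F L)) φ
  let ε : PfisterAlgebra α →ₗ[L] L := (LinearMap.proj ⊥).comp (coeffEquiv α).toLinearMap
  let Ψ : QuadraticForm L ((Fin n → Bool) × ι → L) :=
    (ε.compQuadraticMap Φ.restrictScalars).comp (columns α ι).toLinearMap
  have hε : ∀ (c : F) (x : PfisterAlgebra α),
      ε (((algebraMap L (PfisterAlgebra α)).comp (algebraMap F L)) c * x) =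
        algebraMap F L c * x.coeff ⊥ := fun c x => by
    simp [ε, coeffEquiv, ← Algebra.smul_def]
  have hpolar : ∀ x y, polar Ψ x y = ε (polar Φ (columns α ι x) (columns α ι y)) := fun x y => by
    simp only [polar, map_sub]
    rfl
  suffices qext F (tmulQ F (bPf F a) φ) L = Ψ from congrArg (· w) this
  rw [qext_eq_extendScalars]
  refine quadraticMap_pi_ext (fun ⟨S, i⟩ => ?_) (fun ⟨S, i⟩ ⟨T, j⟩ => ?_)
  · change _ = ε (Φ (columns α ι (Pi.single (S, i) 1)))
    rw [extendScalars_single, tmulQ_single, columns_single, extendScalars_single, hε,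
      coeff_mul_bot, diagPair_monomial, if_pos rfl, bPf_map]
    simp only [map_mul, mul_one]
    ring
  · rw [hpolar, polar_extendScalars_single, polar_tmulQ_single, columns_single, columns_single,
      polar_extendScalars_single, hε, coeff_mul_bot, diagPair_monomial]
    split_ifs with h
    · rw [bPf_map, h]
      simp only [map_mul, mul_one]
      ring
    · simp

lemma qext_tmulQ_bPf_columns_symm_smul {u : PfisterAlgebra fun j => algebraMap F L (a j)} {c : L}
    (hu : u * u = algebraMap L _ c) (x : ι → PfisterAlgebra fun j => algebraMap F L (a j)) :
    qext F (tmulQ F (bPf F a) φ) L ((columns _ ι).symm (u • x)) =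
      c * qext F (tmulQ F (bPf F a) φ) L ((columns _ ι).symm x) := by
  rw [qext_tmulQ_bPf_eq_coeff, qext_tmulQ_bPf_eq_coeff, LinearEquiv.apply_symm_apply,
    LinearEquiv.apply_symm_apply, QuadraticMap.map_smul, smul_eq_mul, hu, ← Algebra.smul_def,
    coeff_smul, Pi.smul_apply, smul_eq_mul]

lemma two_pow_le_iT_of_reduced [CharP L 2]
    (hred : ∀ u : PfisterAlgebra fun j => algebraMap F L (a j), u * u = 0 → u = 0)
    {v : (Fin n → Bool) × ι → L} (hv0 : v ≠ 0) (hv : qext F (tmulQ F (bPf F a) φ) L v = 0) :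
    2 ^ n ≤ iT L (qext F (tmulQ F (bPf F a) φ) L) := by
  set α : Fin n → L := fun j => algebraMap F L (a j)
  let f : PfisterAlgebra α →ₗ[L] (Fin n → Bool) × ι → L := (columns α ι).symm.toLinearMap ∘ₗ
    (LinearMap.toSpanSingleton _ _ (columns α ι v)).restrictScalars L
  have hf : ∀ u, f u = (columns α ι).symm (u • columns α ι v) := fun u => rfl
  rw [← finrank_eq (α := α)]
  refine le_iT_of_injective _ f ((injective_iff_map_eq_zero f).2 fun u hu => hred u ?_) fun u => ?_
  · rw [hf, LinearEquiv.map_eq_zero_iff] at hu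
    have h := congrArg (u • ·) hu
    simp only [smul_zero, ← mul_smul, mul_self_eq_algebraMap u, algebraMap_smul, smul_eq_zero,
      LinearEquiv.map_eq_zero_iff, hv0, or_false] at h
    rw [mul_self_eq_algebraMap u, h, map_zero]
  · rw [hf, qext_tmulQ_bPf_columns_symm_smul a φ (mul_self_eq_algebraMap u),
      LinearEquiv.symm_apply_apply, hv, mul_zero]

lemma card_mul_finrank_le_iT {z : PfisterAlgebra fun j => algebraMap F L (a j)} (hzz : z * z = 0)
    (S : Subalgebra L (PfisterAlgebra fun j => algebraMap F L (a j)))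
    (hz : ∀ y ∈ S, z * y = 0 → y = 0) :
    Fintype.card ι * Module.finrank L S ≤ iT L (qext F (tmulQ F (bPf F a) φ) L) := by
  let f : (ι → S) →ₗ[L] (Fin n → Bool) × ι → L := (columns _ ι).symm.toLinearMap ∘ₗ
    ((LinearMap.mulLeft L z ∘ₗ S.val.toLinearMap).compLeft ι)
  have hf : ∀ w, f w = (columns _ ι).symm (z • fun i => (w i).1) := fun w => rfl
  have hfinrank : Module.finrank L (ι → S) = Fintype.card ι * Module.finrank L S := by
    simp [Module.finrank_pi_fintype]
  rw [← hfinrank]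
  refine le_iT_of_injective _ f ((injective_iff_map_eq_zero f).2 fun w hw => ?_) fun w => ?_
  · rw [hf, LinearEquiv.map_eq_zero_iff] at hw
    funext i
    exact Subtype.ext (hz _ (w i).2 (congrFun hw i))
  · rw [hf, qext_tmulQ_bPf_columns_symm_smul a φ (c := 0) (by rw [hzz, map_zero]), zero_mul]

end PfisterTensor

theorem stmt2_general (F : Type) [Field F] [CharP F 2] {ι : Type} [Fintype ι]
    (φ : QuadraticForm F (ι → F)) (hdim : 2 ≤ Fintype.card ι)
    {n : ℕ} (a : Fin n → F)
    (L : Type) [Field L] [Algebra F L]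
    (hL : IsFunctionField F (tmulQ F (bPf F a) φ) L) :
    2 ^ n ≤ iT L (qext F (tmulQ F (bPf F a) φ) L) := by
  obtain ⟨v, hv, ⟨p, hp⟩, -⟩ := hL
  have hv0 : v ≠ 0 := fun h => by simp [h] at hp
  have : CharP L 2 := charP_of_injective_algebraMap' F 2
  by_cases hred : ∀ u : PfisterAlgebra fun j => algebraMap F L (a j), u * u = 0 → u = 0
  · exact two_pow_le_iT_of_reduced a φ hred hv0 hv
  push Not at hred
  obtain ⟨x, hxx, hx⟩ := hred
  obtain ⟨i, z, hzz, hz⟩ := exists_mul_self_eq_zero_injOn hx hxx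
  calc 2 ^ n ≤ 2 * Module.finrank L (supported _ (univ.erase i)) :=
        two_pow_le_two_mul_finrank_supported i
    _ ≤ Fintype.card ι * Module.finrank L (supported _ (univ.erase i)) := by gcongr
    _ ≤ iT L (qext F (tmulQ F (bPf F a) φ) L) := card_mul_finrank_le_iT a φ hzz _ hz

/-- if `π` is an anisotropic `n`-fold bilinear Pfister form and `φ` a form
of dimension `≥ 2` with `π⊗φ` anisotropic, then `i₁(π⊗φ) ≥ dim π = 2ⁿ`,
i.e. the total isotropy index of `π⊗φ` over its own function field is at least `2ⁿ`. -/
theorem stmt2 (F : Type) [Field F] [CharP F 2] {ι : Type} [Fintype ι]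
    (φ : QuadraticForm F (ι → F)) (hdim : 2 ≤ Fintype.card ι)
    {n : ℕ} (a : Fin n → F) (hπan : BAnisotropic F (bPf F a))
    (han : (tmulQ F (bPf F a) φ).Anisotropic)
    (L : Type) [Field L] [Algebra F L]
    (hL : IsFunctionField F (tmulQ F (bPf F a) φ) L) :
    2 ^ n ≤ iT L (qext F (tmulQ F (bPf F a) φ) L) :=
  stmt2_general F φ hdim a L hL

end Char2QF
end
end

section
/- Let F be a field of characteristic 2, let ψ be an anisotropic quadratic form over F, and let π = ⟨1,a⟩_b be an anisotropic 1-fold bilinear Pfister form over F. If π⊗ψ ≅ ψ ⊥ aψ is isotropic, then there exists an anisotropic binary quadratic form μ dominated by ψ such that either (i) μ is nonsingular (μ ≅ [x,y]) and the Witt index of π⊗μ is 2, or (ii) μ is totally singular (μ ≅ ⟨x,y⟩) and the defect of π⊗μ is 2. Moreover, if the defect of π⊗ψ is positive, then μ can be chosen to satisfy (ii). -/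
/- Common framework: quadratic forms over fields of characteristic 2,
represented as `QuadraticForm F (ι → F)` for a finite index type `ι`
(dimension = `Fintype.card ι`), diagonal bilinear forms represented by
their vectors of diagonal entries, isotropy indices, function fields of
quadrics (characterized up to isomorphism), etc. -/

noncomputable section
/-! Over a field of characteristic 2, an isotropic vector of `π ⊗ ψ = ψ ⊥ aψ` is a pair `(v, w)`
with `ψ v = a ψ w`; anisotropy of `ψ` and of `π` forces `v, w` to be independent, and `μ` is the
restriction of `ψ` to their span. With `e₀, e₁` the corresponding basis of `μ`, the vectors
`(e₀, e₁)` and `(a e₁, e₀)` span a totally isotropic plane of `π ⊗ μ = μ ⊥ aμ`, while `π ⊗ μ`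
restricts to the anisotropic `μ` on the plane of vectors `(c, 0)`, so `i_t(π ⊗ μ) = 2`. If `v, w`
are not orthogonal, `μ` and hence `π ⊗ μ` are nonsingular, and `i_W = i_t = 2`; otherwise both are
totally singular, their quadratic radical is the whole zero set, and `i_d = i_t = 2`. A vector of
the quadratic radical of `π ⊗ ψ` has orthogonal halves, which gives the last claim. -/

namespace Char2QF

open QuadraticMap Module Function

variable {F : Type} [Field F]

theorem _root_.QuadraticMap.Anisotropic.comp_of_injective {V W : Type} [AddCommGroup V]
    [Module F V] [AddCommGroup W] [Module F W] {φ : QuadraticForm F V} (hφ : φ.Anisotropic)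
    {f : W →ₗ[F] V} (hf : Injective f) : (φ.comp f).Anisotropic :=
  fun w hw => hf (by rw [hφ _ hw, map_zero])

section QuadraticSpace

variable {V : Type} [AddCommGroup V] [Module F V]

lemma map_smul_add_smul (φ : QuadraticForm F V) (v w : V) (s t : F) :
    φ (s • v + t • w) = s * s * φ v + s * t * polar φ v w + t * t * φ w := by
  rw [QuadraticMap.map_add (⇑φ), QuadraticMap.map_smul, QuadraticMap.map_smul, polar_smul_left,
    polar_smul_right]
  simp only [smul_eq_mul]
  ring

lemma apply_eq_zero_of_mem_span_pair {φ : QuadraticForm F V} {u u' : V} (hu : φ u = 0)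
    (hu' : φ u' = 0) (huu' : polar φ u u' = 0) {z : V} (hz : z ∈ Submodule.span F {u, u'}) :
    φ z = 0 := by
  obtain ⟨s, t, rfl⟩ := Submodule.mem_span_pair.1 hz
  rw [map_smul_add_smul, hu, hu', huu']
  ring

lemma TotallySingular.mem_quadRadical_iff {φ : QuadraticForm F V} (h : TotallySingular F φ)
    {v : V} : v ∈ quadRadical F φ ↔ φ v = 0 :=
  ⟨And.right, fun hv => ⟨h v, hv⟩⟩

lemma Nonsingular.iD_eq_zero {φ : QuadraticForm F V} (h : Nonsingular F φ) : iD F φ = 0 := by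
  have hrad : quadRadical F φ = ⊥ := eq_bot_iff.2 fun v hv => (Submodule.mem_bot F).2 (h v hv.1)
  rw [iD, hrad, finrank_bot]

variable [FiniteDimensional F V]

lemma finrank_add_finrank_le_of_anisotropicOn {φ : QuadraticForm F V} {U W : Submodule F V}
    (hU : ∀ v ∈ U, φ v = 0) (hW : ∀ w ∈ W, φ w = 0 → w = 0) :
    finrank F U + finrank F W ≤ finrank F V := by
  have hUW : U ⊓ W = ⊥ :=
    eq_bot_iff.2 fun v hv => (Submodule.mem_bot F).2 (hW v hv.2 (hU v hv.1))
  have hsup := Submodule.finrank_sup_add_finrank_inf_eq U W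
  rw [hUW, finrank_bot] at hsup
  have := (U ⊔ W).finrank_le
  omega

lemma iT_eq_of_anisotropicOn {φ : QuadraticForm F V} {U W : Submodule F V}
    (hU : ∀ v ∈ U, φ v = 0) (hW : ∀ w ∈ W, φ w = 0 → w = 0)
    (hdim : finrank F U + finrank F W = finrank F V) : iT F φ = finrank F U := by
  refine IsGreatest.csSup_eq ⟨⟨U, rfl, hU⟩, ?_⟩
  rintro _ ⟨U', rfl, hU'⟩
  have := finrank_add_finrank_le_of_anisotropicOn hU' hW
  omega

lemma TotallySingular.iD_eq_iT {φ : QuadraticForm F V} (h : TotallySingular F φ) :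
    iD F φ = iT F φ := by
  symm
  refine IsGreatest.csSup_eq ⟨⟨quadRadical F φ, rfl, fun _ hv => hv.2⟩, ?_⟩
  rintro _ ⟨U, rfl, hU⟩
  exact Submodule.finrank_mono fun v hv => h.mem_quadRadical_iff.2 (hU v hv)

end QuadraticSpace

lemma bPf1_anisotropic_iff {a : F} :
    BAnisotropic F (bPf1 F a) ↔ ∀ s t : F, s * s + a * (t * t) = 0 → s = 0 ∧ t = 0 := by
  have hpair : ∀ v : Bool → F,
      diagPair F (bPf1 F a) v v = v false * v false + a * (v true * v true) := by
    intro v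
    simp only [diagPair, Fintype.sum_bool, bPf1, ↓reduceIte, Bool.false_eq_true]
    ring
  refine ⟨fun h s t hst => ?_, fun h v hv => ?_⟩
  · have := h (fun b => cond b t s) (by rw [hpair]; exact hst)
    exact ⟨congrFun this false, congrFun this true⟩
  · obtain ⟨h₀, h₁⟩ := h _ _ ((hpair v).symm.trans hv)
    funext b
    cases b
    · exact h₀
    · exact h₁

lemma ne_zero_of_bPf1_anisotropic {a : F} (h : BAnisotropic F (bPf1 F a)) : a ≠ 0 := by
  rintro rfl
  simpa using (bPf1_anisotropic_iff.1 h 0 1 (by ring)).2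

section TensorBPf1

lemma eq_zero_of_curry_eq_zero {κ : Type} {z : Bool × κ → F} (h₀ : curry z false = 0)
    (h₁ : curry z true = 0) : z = 0 := by
  funext ⟨b, i⟩
  cases b
  · exact congrFun h₀ i
  · exact congrFun h₁ i

variable {κ : Type} [Fintype κ]

lemma tmulQ_bPf1_apply (a : F) (q : QuadraticForm F (κ → F)) (z : Bool × κ → F) :
    tmulQ F (bPf1 F a) q z = q (curry z false) + a * q (curry z true) := by
  simp only [tmulQ, Fintype.sum_bool, bPf1, ↓reduceIte, Bool.false_eq_true, one_smul,
    add_apply, smul_apply, QuadraticMap.comp_apply, smul_eq_mul]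
  exact add_comm _ _

lemma polar_tmulQ_bPf1 (a : F) (q : QuadraticForm F (κ → F)) (z y : Bool × κ → F) :
    polar (tmulQ F (bPf1 F a) q) z y
      = polar q (curry z false) (curry y false) + a * polar q (curry z true) (curry y true) := by
  have hadd : ∀ b, curry (z + y) b = curry z b + curry y b := fun _ => rfl
  simp only [polar, tmulQ_bPf1_apply, hadd]
  ring

lemma tmulQ_bPf1_uncurry_single_false (a : F) (q : QuadraticForm F (κ → F)) (c : κ → F) :
    tmulQ F (bPf1 F a) q (uncurry (Pi.single false c)) = q c := by
  simp [tmulQ_bPf1_apply]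

lemma Nonsingular.tmulQ_bPf1 {q : QuadraticForm F (κ → F)} (hq : Nonsingular F q) {a : F}
    (ha : a ≠ 0) : Nonsingular F (tmulQ F (bPf1 F a) q) := by
  intro z hz
  refine eq_zero_of_curry_eq_zero (hq _ fun y => ?_) (hq _ fun y => ?_)
  · simpa [polar_tmulQ_bPf1] using hz (uncurry (Pi.single false y))
  · simpa [polar_tmulQ_bPf1, ha] using hz (uncurry (Pi.single true y))

lemma TotallySingular.tmulQ_bPf1 {q : QuadraticForm F (κ → F)} (hq : TotallySingular F q)
    (a : F) : TotallySingular F (tmulQ F (bPf1 F a) q) := by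
  intro z y
  rw [polar_tmulQ_bPf1, hq, hq, mul_zero, add_zero]

lemma polar_curry_eq_zero_of_mem_quadRadical {a : F} {q : QuadraticForm F (κ → F)}
    {z : Bool × κ → F} (hz : z ∈ quadRadical F (tmulQ F (bPf1 F a) q)) :
    polar q (curry z false) (curry z true) = 0 := by
  simpa [polar_tmulQ_bPf1] using hz.1 (uncurry (Pi.single false (curry z true)))

lemma curry_true_ne_zero_of_isotropic {q : QuadraticForm F (κ → F)} (hq : q.Anisotropic) {a : F}
    {z : Bool × κ → F} (hz : z ≠ 0) (hqz : tmulQ F (bPf1 F a) q z = 0) : curry z true ≠ 0 := by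
  intro h
  rw [tmulQ_bPf1_apply, h, map_zero, mul_zero, add_zero] at hqz
  exact hz (eq_zero_of_curry_eq_zero (hq _ hqz) h)

lemma iT_tmulQ_bPf1_eq_of_isotropic {q : QuadraticForm F (κ → F)} (hq : q.Anisotropic) (a : F)
    {U : Submodule F (Bool × κ → F)} (hU : ∀ z ∈ U, tmulQ F (bPf1 F a) q z = 0)
    (hdim : finrank F U = Fintype.card κ) : iT F (tmulQ F (bPf1 F a) q) = Fintype.card κ := by
  let ι : (κ → F) →ₗ[F] (Bool × κ → F) :=
    (LinearEquiv.curry F F Bool κ).symm.toLinearMap ∘ₗ LinearMap.single F (fun _ => κ → F) false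
  have hι : Injective ι := fun c d h =>
    Pi.single_injective false ((LinearEquiv.curry F F Bool κ).symm.injective h)
  rw [← hdim]
  refine iT_eq_of_anisotropicOn (W := LinearMap.range ι) hU ?_ ?_
  · rintro _ ⟨c, rfl⟩ hc
    have hqc : tmulQ F (bPf1 F a) q (ι c) = q c := tmulQ_bPf1_uncurry_single_false a q c
    rw [hqc] at hc
    rw [hq c hc, map_zero]
  · rw [LinearMap.finrank_range_of_inj hι, hdim]
    simp only [finrank_fintype_fun_eq_card, Fintype.card_prod, Fintype.card_bool]
    ring

end TensorBPf1

lemma exists_binary_restriction {κ : Type} {ψ : QuadraticForm F (κ → F)} (hψ : ψ.Anisotropic)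
    {a : F} (hπ : BAnisotropic F (bPf1 F a)) {v w : κ → F} (hw : w ≠ 0) (hvw : ψ v + a * ψ w = 0) :
    ∃ μ : QuadraticForm F (Bool → F), μ.Anisotropic ∧ Dominates F ψ μ ∧
      μ (Pi.single false 1) + a * μ (Pi.single true 1) = 0 ∧
      polar μ (Pi.single false 1) (Pi.single true 1) = polar ψ v w := by
  set f := Fintype.linearCombination F fun b => cond b w v
  have hf : Injective f := by
    refine linearIndependent_iff_injective_fintypeLinearCombination.1
      (Fintype.linearIndependent_iff.2 fun g hg => ?_)
    simp only [Fintype.sum_bool, cond_true, cond_false] at hg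
    have hsq : g false * g false * ψ v = g true * g true * ψ w := by
      have h := congrArg ψ (eq_neg_of_add_eq_zero_right hg)
      rwa [QuadraticMap.map_neg, QuadraticMap.map_smul, QuadraticMap.map_smul, smul_eq_mul,
        smul_eq_mul] at h
    have hzero : (g true * g true + a * (g false * g false)) * ψ w = 0 := by
      linear_combination -hsq + g false * g false * hvw
    obtain ⟨hgt, hgf⟩ := bPf1_anisotropic_iff.1 hπ _ _
      ((mul_eq_zero.1 hzero).resolve_right fun h => hw (hψ w h))
    rintro (_ | _)
    · exact hgf
    · exact hgt
  refine ⟨ψ.comp f, hψ.comp_of_injective hf, ⟨f, hf, fun _ => rfl⟩, ?_, ?_⟩ <;>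
    simp only [polar, QuadraticMap.comp_apply, map_add, f, Fintype.linearCombination_apply_single,
      one_smul, cond_true, cond_false, hvw]

lemma eq_smul_single_add_smul_single (c : Bool → F) :
    c = c false • Pi.single false 1 + c true • Pi.single true 1 := by
  funext b
  cases b <;> simp

section CharTwo

variable [CharP F 2]

lemma polar_self_eq_zero {V : Type} [AddCommGroup V] [Module F V] (φ : QuadraticForm F V)
    (v : V) : polar φ v v = 0 := by
  rw [polar_self, two_nsmul, CharTwo.add_self_eq_zero]

lemma polar_binary (μ : QuadraticForm F (Bool → F)) (c d : Bool → F) :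
    polar μ c d = polar μ (Pi.single false 1) (Pi.single true 1)
      * (c false * d true + c true * d false) := by
  conv_lhs => rw [eq_smul_single_add_smul_single c, eq_smul_single_add_smul_single d]
  simp only [polar_add_left, polar_add_right, polar_smul_left, polar_smul_right,
    polar_self_eq_zero, smul_eq_mul]
  rw [polar_comm μ (Pi.single true 1)]
  ring

lemma totallySingular_binary_iff (μ : QuadraticForm F (Bool → F)) :
    TotallySingular F μ ↔ polar μ (Pi.single false 1) (Pi.single true 1) = 0 :=
  ⟨fun h => h _ _, fun h c d => by rw [polar_binary, h, zero_mul]⟩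

lemma nonsingular_binary_iff (μ : QuadraticForm F (Bool → F)) :
    Nonsingular F μ ↔ polar μ (Pi.single false 1) (Pi.single true 1) ≠ 0 := by
  refine ⟨fun h hb => ?_, fun hb c hc => ?_⟩
  · have := h (Pi.single false 1) fun d => by rw [polar_binary, hb, zero_mul]
    simpa using congrFun this false
  · funext b
    have h := hc (Pi.single (!b) 1)
    rw [polar_binary] at h
    cases b <;> simpa [hb] using h

lemma iT_tmulQ_bPf1_eq_two {μ : QuadraticForm F (Bool → F)} (hμ : μ.Anisotropic) {a : F}
    (hμa : μ (Pi.single false 1) + a * μ (Pi.single true 1) = 0) :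
    iT F (tmulQ F (bPf1 F a) μ) = 2 := by
  set e₀ : Bool → F := Pi.single false 1
  set e₁ : Bool → F := Pi.single true 1
  set u : Bool × Bool → F := uncurry fun b => cond b e₁ e₀
  set u' : Bool × Bool → F := uncurry fun b => cond b e₀ (a • e₁)
  have hu : tmulQ F (bPf1 F a) μ u = 0 := by simpa [tmulQ_bPf1_apply, u] using hμa
  have hu' : tmulQ F (bPf1 F a) μ u' = 0 := by
    simp only [tmulQ_bPf1_apply, u', curry_uncurry, cond_true, cond_false, QuadraticMap.map_smul,
      smul_eq_mul]
    linear_combination a * hμa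
  have huu' : polar (tmulQ F (bPf1 F a) μ) u u' = 0 := by
    simp only [polar_tmulQ_bPf1, u, u', curry_uncurry, cond_true, cond_false, polar_smul_right,
      smul_eq_mul, polar_comm μ e₁]
    rw [← two_mul, CharTwo.two_eq_zero, zero_mul]
  have hind : LinearIndependent F ![u, u'] := LinearIndependent.pair_iff.2 fun s t hst => by
    constructor
    · simpa [u, u', e₀, e₁] using congrFun hst (true, true)
    · simpa [u, u', e₀, e₁] using congrFun hst (true, false)
  have hU : finrank F (Submodule.span F {u, u'}) = Fintype.card Bool := by
    rw [← Matrix.range_cons_cons_empty u u' ![]]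
    exact finrank_span_eq_card hind
  exact iT_tmulQ_bPf1_eq_of_isotropic hμ a
    (fun z hz => apply_eq_zero_of_mem_span_pair hu hu' huu' hz) hU

lemma exists_binary_subform {κ : Type} [Fintype κ] {ψ : QuadraticForm F (κ → F)}
    (hψ : ψ.Anisotropic) {a : F} (hπ : BAnisotropic F (bPf1 F a)) {z : Bool × κ → F} (hz : z ≠ 0)
    (hqz : tmulQ F (bPf1 F a) ψ z = 0) :
    ∃ μ : QuadraticForm F (Bool → F), μ.Anisotropic ∧ Dominates F ψ μ ∧
      (polar ψ (curry z false) (curry z true) ≠ 0 →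
        Nonsingular F μ ∧ iW F (tmulQ F (bPf1 F a) μ) = 2) ∧
      (polar ψ (curry z false) (curry z true) = 0 →
        TotallySingular F μ ∧ iD F (tmulQ F (bPf1 F a) μ) = 2) := by
  obtain ⟨μ, hμ, hdom, hμa, hpolar⟩ := exists_binary_restriction hψ hπ
    (curry_true_ne_zero_of_isotropic hψ hz hqz) ((tmulQ_bPf1_apply a ψ z).symm.trans hqz)
  have hiT := iT_tmulQ_bPf1_eq_two hμ hμa
  refine ⟨μ, hμ, hdom, fun hb => ?_, fun hb => ?_⟩
  · have hns : Nonsingular F μ := (nonsingular_binary_iff μ).2 (hpolar ▸ hb)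
    refine ⟨hns, ?_⟩
    rw [iW, hiT, (hns.tmulQ_bPf1 (ne_zero_of_bPf1_anisotropic hπ)).iD_eq_zero]
  · have hts : TotallySingular F μ := (totallySingular_binary_iff μ).2 (hpolar ▸ hb)
    exact ⟨hts, by rw [(hts.tmulQ_bPf1 a).iD_eq_iT, hiT]⟩

end CharTwo

/-- let `ψ` be anisotropic, `π = ⟨1,a⟩_b` an anisotropic 1-fold
bilinear Pfister form, and suppose `π⊗ψ` is isotropic. Then there is an anisotropic
binary form `μ ≼ ψ` with either (`μ` nonsingular and `i_W(π⊗μ) = 2`) or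
(`μ` totally singular and `i_d(π⊗μ) = 2`); moreover, if `i_d(π⊗ψ) > 0` then `μ`
can be chosen totally singular with `i_d(π⊗μ) = 2`. -/
theorem stmt14 (F : Type) [Field F] [CharP F 2] {κ : Type} [Fintype κ]
    (ψ : QuadraticForm F (κ → F)) (hψan : ψ.Anisotropic)
    (a : F) (hπan : BAnisotropic F (bPf1 F a))
    (hiso : Isotropic F (tmulQ F (bPf1 F a) ψ)) :
    (∃ μ : QuadraticForm F (Bool → F), μ.Anisotropic ∧ Dominates F ψ μ ∧
      ((Nonsingular F μ ∧ iW F (tmulQ F (bPf1 F a) μ) = 2) ∨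
       (TotallySingular F μ ∧ iD F (tmulQ F (bPf1 F a) μ) = 2))) ∧
    (0 < iD F (tmulQ F (bPf1 F a) ψ) →
      ∃ μ : QuadraticForm F (Bool → F), μ.Anisotropic ∧ Dominates F ψ μ ∧
        TotallySingular F μ ∧ iD F (tmulQ F (bPf1 F a) μ) = 2) := by
  obtain ⟨z, hz, hqz⟩ := hiso
  refine ⟨?_, fun hd => ?_⟩
  · obtain ⟨μ, hμ, hdom, hns, hts⟩ := exists_binary_subform hψan hπan hz hqz
    by_cases hb : polar ψ (curry z false) (curry z true) = 0
    · exact ⟨μ, hμ, hdom, .inr (hts hb)⟩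
    · exact ⟨μ, hμ, hdom, .inl (hns hb)⟩
  · obtain ⟨r, hr, hr0⟩ :=
      Submodule.exists_mem_ne_zero_of_ne_bot (Submodule.one_le_finrank_iff.1 hd)
    obtain ⟨μ, hμ, hdom, -, hts⟩ := exists_binary_subform hψan hπan hr0 hr.2
    exact ⟨μ, hμ, hdom, hts (polar_curry_eq_zero_of_mem_quadRadical hr)⟩

end Char2QF
end
end
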